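/- arXiv:1510.00892 — 6 statements merged into one kernel-verified Lean document; each statement's English description precedes it below -/
import Mathlib

section
/- Every algebra A in I₂,₀ satisfies the identity x' → 0' = 0 → x. -/
/-! Write `1` for `0′`. Instantiating (I) at `(x, 0, 1)` and using `x′′ = x` gives
`x′ → 1 = ((0 → x) → (0 → 1)′)′`, so everything reduces to the constant identity `0 → 1 = 1`,
which follows from a few further instances of (I) at constants. -/

section ImplicationZroupoid

variable {A : Type*} {i : A → A → A} {z : A}

local infixr:60 " ⇒ " => i
local notation:max a "′" => i a z

theorem zero_imp_zero_prime
    (hI : ∀ x y w : A, i (i x y) w = i (i (i (i w z) x) (i (i y w) z)) z)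
    (h2 : ∀ x : A, i (i x z) z = x) :
    z ⇒ z′ = z′ := by
  have one_imp_one : z′ ⇒ z′ = z′ := by
    simpa only [h2] using (hI z′ z z).symm
  have zero_imp_one_imp_one : (z ⇒ z′) ⇒ z′ = z′ := by
    simpa only [one_imp_one, h2] using hI z z′ z′
  have one_imp_zero_imp_one_imp_one : (z′ ⇒ (z ⇒ z′)) ⇒ z′ = z ⇒ z′ := by
    simpa only [zero_imp_one_imp_one, h2] using hI z′ (z ⇒ z′) z′
  have zero_imp_one_prime : (z ⇒ z′)′ = z := by
    simpa only [zero_imp_one_imp_one, h2, one_imp_zero_imp_one_imp_one] using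
      (hI (z ⇒ z′) z′ z).symm
  rw [← h2 (z ⇒ z′), zero_imp_one_prime]

end ImplicationZroupoid

theorem stmt_1_general (A : Type*) (i : A → A → A) (z : A)
    (hI : ∀ x y w : A, i (i x y) w = i (i (i (i w z) x) (i (i y w) z)) z)
    (h2 : ∀ x : A, i (i x z) z = x) :
    ∀ x : A, i (i x z) (i z z) = i z x := by
  intro x
  have := hI x z (i z z)
  rwa [h2 z, zero_imp_zero_prime hI h2, h2, h2] at this

theorem stmt_1 (A : Type*) (i : A → A → A) (z : A)
    (hI : ∀ x y w : A, i (i x y) w = i (i (i (i w z) x) (i (i y w) z)) z)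
    (hI0 : i (i z z) z = z)
    (h2 : ∀ x : A, i (i x z) z = x) :
    ∀ x : A, i (i x z) (i z z) = i z x :=
  stmt_1_general A i z hI h2
end

section
/- Every algebra A in I₂,₀ satisfies the identity (x → y)' → (0 → x)' = y' → x'. -/
theorem stmt_8 (A : Type*) (i : A → A → A) (z : A)
    (hI : ∀ x y w : A, i (i x y) w = i (i (i (i w z) x) (i (i y w) z)) z)
    (hI0 : i (i z z) z = z)
    (h2 : ∀ x : A, i (i x z) z = x) :
    ∀ x y : A, i (i (i x y) z) (i (i z x) z) = i (i y z) (i x z) := by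
  have hIp : ∀ x y w : A, i (i (i x y) w) z = i (i (i w z) x) (i (i y w) z) := by
    intro x y w
    calc (i (i (i x y) w) z)
      _ = (i (i (i (i (i w z) x) (i (i y w) z)) z) z) := by
          conv_lhs => enter [1]; rw [hI x y w]
      _ = (i (i (i w z) x) (i (i y w) z)) := by
          conv_lhs => rw [h2 (i (i (i w z) x) (i (i y w) z))]
  have hA : ∀ x y : A, i (i (i z z) x) y = i x y := by
    intro x y
    calc (i (i (i z z) x) y)
      _ = (i (i (i z z) x) (i (i y z) z)) := by
          conv_lhs => enter [2]; rw [← h2 y]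
      _ = (i (i (i x y) z) z) := by
          conv_lhs => rw [← hIp x y z]
      _ = (i x y) := by
          conv_lhs => rw [h2 (i x y)]
  have l0 : ∀ x : A, i (i z z) x = x := by
    intro x
    calc (i (i z z) x)
      _ = (i (i (i (i z z) x) z) z) := by
          conv_lhs => rw [← h2 (i (i z z) x)]
      _ = (i (i x z) z) := by
          conv_lhs => enter [1]; rw [hA x z]
      _ = x := by
          conv_lhs => rw [h2 x]
  have lC : ∀ y w : A, i (i (i z y) w) z = i w (i (i y w) z) := by
    intro y w
    calc (i (i (i z y) w) z)
      _ = (i (i (i w z) z) (i (i y w) z)) := by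
          conv_lhs => rw [hIp z y w]
      _ = (i (i (i w z) z) (i (i (i (i z z) y) (i (i w z) z)) z)) := by
          conv_lhs => enter [2]; rw [hI y w z]
      _ = (i w (i (i (i (i z z) y) w) z)) := by
          conv_lhs => enter [1]; rw [h2 w]
          conv_lhs => enter [2, 1, 2]; rw [h2 w]
      _ = (i w (i (i y w) z)) := by
          conv_lhs => enter [2, 1]; rw [hA y w]
  have lE : ∀ x : A, i x (i (i z x) z) = i x z := by
    intro x
    calc (i x (i (i z x) z))
      _ = (i (i (i z z) x) z) := by
          conv_lhs => rw [← lC z x]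
      _ = (i x z) := by
          conv_lhs => rw [hA x z]
  have lm : ∀ x : A, i x (i x z) = i x z := by
    intro x
    calc (i x (i x z))
      _ = (i x (i (i (i z z) x) z)) := by
          conv_lhs => enter [2]; rw [← hA x z]
      _ = (i (i (i z (i z z)) x) z) := by
          conv_lhs => rw [← lC (i z z) x]
      _ = (i (i (i (i (i z (i z z)) z) z) x) z) := by
          conv_lhs => enter [1, 1]; rw [← h2 (i z (i z z))]
      _ = (i (i (i (i (i z z) (i (i z (i z z)) z)) z) x) z) := by
          conv_lhs => enter [1, 1, 1]; rw [← l0 (i (i z (i z z)) z)]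
      _ = (i (i (i (i (i z z) z) z) x) z) := by
          conv_lhs => enter [1, 1, 1]; rw [lE (i z z)]
      _ = (i (i (i z z) x) z) := by
          conv_lhs => enter [1, 1]; rw [h2 (i z z)]
      _ = (i x z) := by
          conv_lhs => rw [hA x z]
  have lxx : ∀ x : A, i (i x z) x = x := by
    intro x
    calc (i (i x z) x)
      _ = (i (i x z) (i (i x z) z)) := by
          conv_lhs => enter [2]; rw [← h2 x]
      _ = (i (i x z) z) := by
          conv_lhs => rw [lm (i x z)]
      _ = x := by
          conv_lhs => rw [h2 x]
  have lb : ∀ x : A, i z (i z x) = i z x := by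
    intro x
    calc (i z (i z x))
      _ = (i (i (i z (i z x)) z) z) := by
          conv_lhs => rw [← h2 (i z (i z x))]
      _ = (i (i (i (i z z) (i z (i z x))) (i (i z z) z)) z) := by
          conv_lhs => rw [hI (i z (i z x)) z z]
      _ = (i (i (i z (i z x)) (i (i z z) z)) z) := by
          conv_lhs => enter [1, 1]; rw [l0 (i z (i z x))]
      _ = (i (i (i z (i z x)) (i (i (i z z) (i z z)) z)) z) := by
          conv_lhs => enter [1, 2, 1]; rw [← l0 (i z z)]
      _ = (i (i (i (i (i z z) z) (i z x)) (i (i (i z z) (i z z)) z)) z) := by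
          conv_lhs => enter [1, 1]; rw [← hA z (i z x)]
      _ = (i (i (i z x) (i z z)) (i z z)) := by
          conv_lhs => rw [← hI (i z x) (i z z) (i z z)]
      _ = (i (i (i (i (i z x) (i z z)) z) z) (i z z)) := by
          conv_lhs => enter [1]; rw [← h2 (i (i z x) (i z z))]
      _ = (i (i (i (i z z) (i (i x (i z z)) z)) z) (i z z)) := by
          conv_lhs => enter [1, 1]; rw [lC x (i z z)]
      _ = (i (i (i (i x (i z z)) z) z) (i z z)) := by
          conv_lhs => enter [1, 1]; rw [l0 (i (i x (i z z)) z)]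
      _ = (i (i x (i z z)) (i z z)) := by
          conv_lhs => enter [1]; rw [h2 (i x (i z z))]
      _ = (i (i (i (i (i z z) z) x) (i (i (i z z) (i z z)) z)) z) := by
          conv_lhs => rw [hI x (i z z) (i z z)]
      _ = (i (i (i z x) (i (i (i z z) (i z z)) z)) z) := by
          conv_lhs => enter [1, 1]; rw [hA z x]
      _ = (i (i (i z x) (i (i z z) z)) z) := by
          conv_lhs => enter [1, 2, 1]; rw [l0 (i z z)]
      _ = (i (i (i (i z z) (i z x)) (i (i z z) z)) z) := by
          conv_lhs => enter [1, 1]; rw [← l0 (i z x)]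
      _ = (i (i (i z x) z) z) := by
          conv_lhs => rw [← hI (i z x) z z]
      _ = (i z x) := by
          conv_lhs => rw [h2 (i z x)]
  have lzy : ∀ x y : A, i (i x y) x = i (i z y) x := by
    intro x y
    calc (i (i x y) x)
      _ = (i (i (i (i x z) x) (i (i y x) z)) z) := by
          conv_lhs => rw [hI x y x]
      _ = (i (i x (i (i y x) z)) z) := by
          conv_lhs => enter [1, 1]; rw [lxx x]
      _ = (i (i (i (i z y) x) z) z) := by
          conv_lhs => enter [1]; rw [← lC y x]
      _ = (i (i z y) x) := by
          conv_lhs => rw [h2 (i (i z y) x)]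
  have lS : ∀ x : A, i z (i (i z x) z) = i z (i x z) := by
    intro x
    calc (i z (i (i z x) z))
      _ = (i (i (i z (i (i z x) z)) z) z) := by
          conv_lhs => rw [← h2 (i z (i (i z x) z))]
      _ = (i (i (i (i z z) (i z (i (i z x) z))) (i (i z z) z)) z) := by
          conv_lhs => rw [hI (i z (i (i z x) z)) z z]
      _ = (i (i (i z (i (i z x) z)) (i (i z z) z)) z) := by
          conv_lhs => enter [1]; rw [hA (i z (i (i z x) z)) (i (i z z) z)]
      _ = (i (i (i z (i (i z x) z)) (i (i z (i z z)) z)) z) := by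
          conv_lhs => enter [1, 2, 1]; rw [← lm z]
      _ = (i (i (i (i (i z z) z) (i (i z x) z)) (i (i z (i z z)) z)) z) := by
          conv_lhs => enter [1, 1]; rw [← hA z (i (i z x) z)]
      _ = (i (i (i (i z x) z) z) (i z z)) := by
          conv_lhs => rw [← hI (i (i z x) z) z (i z z)]
      _ = (i (i z x) (i z z)) := by
          conv_lhs => enter [1]; rw [h2 (i z x)]
      _ = (i (i (i z z) x) (i z z)) := by
          conv_lhs => rw [← lzy (i z z) x]
      _ = (i x (i z z)) := by
          conv_lhs => rw [hA x (i z z)]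
      _ = (i (i (i x z) z) (i z z)) := by
          conv_lhs => enter [1]; rw [← h2 x]
      _ = (i (i (i (i (i z z) z) (i x z)) (i (i z (i z z)) z)) z) := by
          conv_lhs => rw [hI (i x z) z (i z z)]
      _ = (i (i (i z (i x z)) (i (i z (i z z)) z)) z) := by
          conv_lhs => enter [1, 1]; rw [hA z (i x z)]
      _ = (i (i (i z (i x z)) (i (i z z) z)) z) := by
          conv_lhs => enter [1, 2, 1]; rw [lm z]
      _ = (i (i (i (i z z) (i z (i x z))) (i (i z z) z)) z) := by
          conv_lhs => enter [1, 1]; rw [← l0 (i z (i x z))]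
      _ = (i (i (i z (i x z)) z) z) := by
          conv_lhs => rw [← hI (i z (i x z)) z z]
      _ = (i z (i x z)) := by
          conv_lhs => rw [h2 (i z (i x z))]
  have lxz : ∀ x : A, i x (i z z) = i z (i x z) := by
    intro x
    calc (i x (i z z))
      _ = (i (i (i x z) z) (i z z)) := by
          conv_lhs => enter [1]; rw [← h2 x]
      _ = (i (i (i (i (i z z) z) (i x z)) (i (i z (i z z)) z)) z) := by
          conv_lhs => rw [hI (i x z) z (i z z)]
      _ = (i (i (i z (i x z)) (i (i z (i z z)) z)) z) := by
          conv_lhs => enter [1, 1]; rw [hA z (i x z)]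
      _ = (i (i (i z (i x z)) (i (i z z) z)) z) := by
          conv_lhs => enter [1, 2, 1]; rw [lm z]
      _ = (i (i (i (i z z) (i z (i x z))) (i (i z z) z)) z) := by
          conv_lhs => enter [1]; rw [← hA (i z (i x z)) (i (i z z) z)]
      _ = (i (i (i z (i x z)) z) z) := by
          conv_lhs => rw [← hI (i z (i x z)) z z]
      _ = (i z (i x z)) := by
          conv_lhs => rw [h2 (i z (i x z))]
  have lK : ∀ x y : A, i (i x y) z = i (i z y) (i (i x y) z) := by
    intro x y
    calc (i (i x y) z)
      _ = (i (i (i (i z z) x) y) z) := by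
          conv_lhs => enter [1]; rw [← hA x y]
      _ = (i (i (i y z) (i z z)) (i (i x y) z)) := by
          conv_lhs => rw [hIp (i z z) x y]
      _ = (i (i z (i (i y z) z)) (i (i x y) z)) := by
          conv_lhs => enter [1]; rw [lxz (i y z)]
      _ = (i (i (i (i z y) z) z) (i (i x y) z)) := by
          conv_lhs => enter [1]; rw [← lC y z]
      _ = (i (i z y) (i (i x y) z)) := by
          conv_lhs => enter [1]; rw [h2 (i z y)]
  have lM : ∀ x y : A, i x y = i (i (i (i y z) (i x z)) (i (i z y) z)) z := by
    intro x y
    calc (i x y)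
      _ = (i (i (i x z) z) y) := by
          conv_lhs => enter [1]; rw [← h2 x]
      _ = (i (i (i (i y z) (i x z)) (i (i z y) z)) z) := by
          conv_lhs => rw [hI (i x z) z y]
  have lW1 : ∀ x : A, i (i x z) (i z x) = i z x := by
    intro x
    calc (i (i x z) (i z x))
      _ = (i (i (i (i (i z x) z) x) (i (i z (i z x)) z)) z) := by
          conv_lhs => rw [hI x z (i z x)]
      _ = (i (i (i (i (i z x) z) x) (i (i z x) z)) z) := by
          conv_lhs => enter [1, 2, 1]; rw [lb x]
      _ = (i (i (i z x) (i (i z x) z)) z) := by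
          conv_lhs => enter [1]; rw [lzy (i (i z x) z) x]
      _ = (i (i (i z x) z) z) := by
          conv_lhs => enter [1]; rw [lm (i z x)]
      _ = (i z x) := by
          conv_lhs => rw [h2 (i z x)]
  have lU : ∀ x : A, i (i z (i x z)) (i z x) = i z x := by
    intro x
    calc (i (i z (i x z)) (i z x))
      _ = (i (i (i (i (i z x) z) z) (i (i (i x z) (i z x)) z)) z) := by
          conv_lhs => rw [hI z (i x z) (i z x)]
      _ = (i (i (i z x) (i (i (i x z) (i z x)) z)) z) := by
          conv_lhs => enter [1, 1]; rw [h2 (i z x)]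
      _ = (i (i (i z x) (i (i z x) z)) z) := by
          conv_lhs => enter [1, 2, 1]; rw [lW1 x]
      _ = (i (i (i z x) z) z) := by
          conv_lhs => enter [1]; rw [lm (i z x)]
      _ = (i z x) := by
          conv_lhs => rw [h2 (i z x)]
  intro x y
  calc (i (i (i x y) z) (i (i z x) z))
    _ = (i (i (i (i (i (i z x) z) z) (i (i (i x y) z) z)) (i (i z (i (i z x) z)) z)) z) := by
        conv_lhs => rw [lM (i (i x y) z) (i (i z x) z)]
    _ = (i (i (i (i z x) (i (i (i x y) z) z)) (i (i z (i (i z x) z)) z)) z) := by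
        conv_lhs => enter [1, 1, 1]; rw [h2 (i z x)]
    _ = (i (i (i (i z x) (i x y)) (i (i z (i (i z x) z)) z)) z) := by
        conv_lhs => enter [1, 1, 2]; rw [h2 (i x y)]
    _ = (i (i (i (i z x) (i x y)) (i (i z (i x z)) z)) z) := by
        conv_lhs => enter [1, 2, 1]; rw [lS x]
    _ = (i (i (i (i (i (i (i z (i x z)) z) z) (i z x)) (i (i (i x y) (i (i z (i x z)) z)) z)) z) z) := by
        conv_lhs => enter [1]; rw [hI (i z x) (i x y) (i (i z (i x z)) z)]
    _ = (i (i (i (i (i z (i x z)) z) z) (i z x)) (i (i (i x y) (i (i z (i x z)) z)) z)) := by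
        conv_lhs => rw [h2 (i (i (i (i (i z (i x z)) z) z) (i z x)) (i (i (i x y) (i (i z (i x z)) z)) z))]
    _ = (i (i (i z (i x z)) (i z x)) (i (i (i x y) (i (i z (i x z)) z)) z)) := by
        conv_lhs => enter [1, 1]; rw [h2 (i z (i x z))]
    _ = (i (i z x) (i (i (i x y) (i (i z (i x z)) z)) z)) := by
        conv_lhs => enter [1]; rw [lU x]
    _ = (i (i z (i (i x z) z)) (i (i (i x y) (i (i z (i x z)) z)) z)) := by
        conv_lhs => enter [1, 2]; rw [← h2 x]
    _ = (i (i z (i (i z (i x z)) z)) (i (i (i x y) (i (i z (i x z)) z)) z)) := by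
        conv_lhs => enter [1]; rw [← lS (i x z)]
    _ = (i (i (i x y) (i (i z (i x z)) z)) z) := by
        conv_lhs => rw [← lK (i x y) (i (i z (i x z)) z)]
    _ = (i (i (i (i (i x z) z) y) (i (i z (i x z)) z)) z) := by
        conv_lhs => enter [1, 1, 1]; rw [← h2 x]
    _ = (i (i (i (i (i x z) z) (i (i y z) z)) (i (i z (i x z)) z)) z) := by
        conv_lhs => enter [1, 1, 2]; rw [← h2 y]
    _ = (i (i y z) (i x z)) := by
        conv_lhs => rw [← lM (i y z) (i x z)]
end

section
/- In any algebra A in I₂,₀, the relation defined by x ⊑ y iff (x → y')' = x is antisymmetric: if (a → b')' = a and (b → a')' = b, then a = b. -/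
theorem stmt_10 (A : Type*) (i : A → A → A) (z : A)
    (hI : ∀ x y w : A, i (i x y) w = i (i (i (i w z) x) (i (i y w) z)) z)
    (hI0 : i (i z z) z = z)
    (h2 : ∀ x : A, i (i x z) z = x)
    (a b : A) (hab : i (i a (i b z)) z = a) (hba : i (i b (i a z)) z = b) :
    a = b := by
  calc a = i (i a z) z := (h2 a).symm
    _ = i (i (i (i a z) z) z) z := (h2 (i (i a z) z)).symm
    _ = i (i (i (i (i z z) (i a z)) (i (i z z) z)) z) z := (congrArg (fun u => i u z) (hI (i a z) z z))
    _ = i (i (i z z) (i a z)) (i (i z z) z) := (h2 (i (i (i z z) (i a z)) (i (i z z) z)))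
    _ = i (i (i z z) (i a z)) z := (congrArg (fun u => i (i (i z z) (i a z)) u) (h2 z))
    _ = i (i (i (i (i (i a z) z) z) (i (i z (i a z)) z)) z) z := (congrArg (fun u => i u z) (hI z z (i a z)))
    _ = i (i (i (i a z) (i (i z (i a z)) z)) z) z := (congrArg (fun u => i (i (i u (i (i z (i a z)) z)) z) z) (h2 (i a z)))
    _ = i (i (i (i (i (i a (i b z)) z) z) (i (i z (i a z)) z)) z) z := (congrArg (fun u => i (i (i (i u z) (i (i z (i a z)) z)) z) z) hab.symm)
    _ = i (i (i (i a (i b z)) (i (i z (i a z)) z)) z) z := (congrArg (fun u => i (i (i u (i (i z (i a z)) z)) z) z) (h2 (i a (i b z))))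
    _ = i (i (i (i (i (i a z) z) (i b z)) (i (i z (i a z)) z)) z) z := (congrArg (fun u => i (i (i (i u (i b z)) (i (i z (i a z)) z)) z) z) (h2 a).symm)
    _ = i (i (i (i b z) z) (i a z)) z := (congrArg (fun u => i u z) (hI (i b z) z (i a z)).symm)
    _ = i (i b (i a z)) z := (congrArg (fun u => i (i u (i a z)) z) (h2 b))
    _ = b := hba
end

section
/- In any algebra A in I₂,₀, if (a → b')' = a (i.e., a ⊑ b), then b → a' = a'. -/
/-!
By (I), `(x → y) → w` depends on `x` only through `w' → x`. Under `x'' = x` the hypothesis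
says `a → b' = a'`, i.e. `a'' → b' = a'' → 0`, so `b → a' = (b' → 0) → a'` may be replaced by
`(0 → 0) → a' = 0' → a'`, and `0'` is a left unit for `→`.
-/

section ImplicationZroupoid

variable {A : Type*} {i : A → A → A} {z : A}

theorem imp_imp_congr_of_neg_imp_eq
    (hI : ∀ x y w : A, i (i x y) w = i (i (i (i w z) x) (i (i y w) z)) z)
    {x₁ x₂ y w : A} (h : i (i w z) x₁ = i (i w z) x₂) :
    i (i x₁ y) w = i (i x₂ y) w := by
  rw [hI x₁ y w, hI x₂ y w, h]

theorem neg_zero_imp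
    (hI : ∀ x y w : A, i (i x y) w = i (i (i (i w z) x) (i (i y w) z)) z)
    (h2 : ∀ x : A, i (i x z) z = x) (x : A) :
    i (i z z) x = x := by
  simpa only [h2] using (hI x z z).symm

end ImplicationZroupoid

theorem stmt_11_general (A : Type*) (i : A → A → A) (z : A)
    (hI : ∀ x y w : A, i (i x y) w = i (i (i (i w z) x) (i (i y w) z)) z)
    (h2 : ∀ x : A, i (i x z) z = x)
    (a b : A) (hab : i (i a (i b z)) z = a) :
    i b (i a z) = i a z := by
  have hab' : i a (i b z) = i a z := by
    simpa only [h2] using congrArg (fun x => i x z) hab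
  calc i b (i a z) = i (i (i b z) z) (i a z) := by rw [h2]
    _ = i (i z z) (i a z) := imp_imp_congr_of_neg_imp_eq hI (by rwa [h2])
    _ = i a z := neg_zero_imp hI h2 _

theorem stmt_11 (A : Type*) (i : A → A → A) (z : A)
    (hI : ∀ x y w : A, i (i x y) w = i (i (i (i w z) x) (i (i y w) z)) z)
    (hI0 : i (i z z) z = z)
    (h2 : ∀ x : A, i (i x z) z = x)
    (a b : A) (hab : i (i a (i b z)) z = a) :
    i b (i a z) = i a z :=
  stmt_11_general A i z hI h2 a b hab
end

section
/- In any algebra A in I₂,₀, if 0 ⊑ a ⊑ b (i.e., (0 → a')' = 0 and (a → b')' = a), then b' ⊑ a' (i.e., (b' → a'')' = b'). -/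
theorem stmt_16 (A : Type*) (i : A → A → A) (z : A)
    (hI : ∀ x y w : A, i (i x y) w = i (i (i (i w z) x) (i (i y w) z)) z)
    (hI0 : i (i z z) z = z)
    (h2 : ∀ x : A, i (i x z) z = x)
    (a b : A) (h0a : i (i z (i a z)) z = z) (hab : i (i a (i b z)) z = a) :
    i (i (i b z) (i (i a z) z)) z = i b z := by
  have step0 : i (i (i b z) (i (i a z) z)) z = (i (i (i b z) a) z) := by rw [h2 a]
  have step1 : (i (i (i b z) a) z) = (i (i (i (i (i b z) z) z) a) z) := congrArg (fun u => (i (i u a) z)) (h2 (i b z)).symm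
  have step2 : (i (i (i (i (i b z) z) z) a) z) = (i (i (i (i (i b z) z) z) (i (i a (i b z)) z)) z) := congrArg (fun u => (i (i (i (i (i b z) z) z) u) z)) hab.symm
  have step3 : (i (i (i (i (i b z) z) z) (i (i a (i b z)) z)) z) = (i (i z a) (i b z)) := (hI z a (i b z)).symm
  have step4 : (i (i z a) (i b z)) = (i (i (i (i z a) z) z) (i b z)) := congrArg (fun u => (i u (i b z))) (h2 (i z a)).symm
  have step5 : (i (i (i (i z a) z) z) (i b z)) = (i (i (i (i z a) (i (i z z) z)) z) (i b z)) := congrArg (fun u => (i (i (i (i z a) u) z) (i b z))) (h2 z).symm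
  have step6 : (i (i (i (i z a) (i (i z z) z)) z) (i b z)) = (i (i (i (i z a) (i (i (i (i z z) z) z) z)) z) (i b z)) := congrArg (fun u => (i (i (i (i z a) u) z) (i b z))) (h2 (i (i z z) z)).symm
  have step7 : (i (i (i (i z a) (i (i (i (i z z) z) z) z)) z) (i b z)) = (i (i (i (i z a) (i (i (i (i (i z z) (i z z)) (i (i z z) z)) z) z)) z) (i b z)) := congrArg (fun u => (i (i (i (i z a) (i u z)) z) (i b z))) (hI (i z z) z z)
  have step8 : (i (i (i (i z a) (i (i (i (i (i z z) (i z z)) (i (i z z) z)) z) z)) z) (i b z)) = (i (i (i (i z a) (i (i (i z z) (i z z)) (i (i z z) z))) z) (i b z)) := congrArg (fun u => (i (i (i (i z a) u) z) (i b z))) (h2 (i (i (i z z) (i z z)) (i (i z z) z)))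
  have step9 : (i (i (i (i z a) (i (i (i z z) (i z z)) (i (i z z) z))) z) (i b z)) = (i (i (i (i z a) (i (i (i z z) (i z z)) z)) z) (i b z)) := congrArg (fun u => (i (i (i (i z a) (i (i (i z z) (i z z)) u)) z) (i b z))) (h2 z)
  have step10 : (i (i (i (i z a) (i (i (i z z) (i z z)) z)) z) (i b z)) = (i (i (i (i (i (i z z) z) a) (i (i (i z z) (i z z)) z)) z) (i b z)) := congrArg (fun u => (i (i (i (i u a) (i (i (i z z) (i z z)) z)) z) (i b z))) (h2 z).symm
  have step11 : (i (i (i (i (i (i z z) z) a) (i (i (i z z) (i z z)) z)) z) (i b z)) = (i (i (i a (i z z)) (i z z)) (i b z)) := congrArg (fun u => (i u (i b z))) (hI a (i z z) (i z z)).symm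
  have step12 : (i (i (i a (i z z)) (i z z)) (i b z)) = (i (i (i (i (i a (i z z)) z) z) (i z z)) (i b z)) := congrArg (fun u => (i (i u (i z z)) (i b z))) (h2 (i a (i z z))).symm
  have step13 : (i (i (i (i (i a (i z z)) z) z) (i z z)) (i b z)) = (i (i (i (i (i (i (i a z) z) (i z z)) z) z) (i z z)) (i b z)) := congrArg (fun u => (i (i (i (i (i u (i z z)) z) z) (i z z)) (i b z))) (h2 a).symm
  have step14 : (i (i (i (i (i (i (i a z) z) (i z z)) z) z) (i z z)) (i b z)) = (i (i (i (i (i (i (i a z) z) (i z z)) (i (i z (i a z)) z)) z) (i z z)) (i b z)) := congrArg (fun u => (i (i (i (i (i (i (i a z) z) (i z z)) u) z) (i z z)) (i b z))) h0a.symm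
  have step15 : (i (i (i (i (i (i (i a z) z) (i z z)) (i (i z (i a z)) z)) z) (i z z)) (i b z)) = (i (i (i (i (i z z) z) (i a z)) (i z z)) (i b z)) := congrArg (fun u => (i (i u (i z z)) (i b z))) (hI (i z z) z (i a z)).symm
  have step16 : (i (i (i (i (i z z) z) (i a z)) (i z z)) (i b z)) = (i (i (i z (i a z)) (i z z)) (i b z)) := congrArg (fun u => (i (i (i u (i a z)) (i z z)) (i b z))) (h2 z)
  have step17 : (i (i (i z (i a z)) (i z z)) (i b z)) = (i (i (i (i (i z (i a z)) z) z) (i z z)) (i b z)) := congrArg (fun u => (i (i u (i z z)) (i b z))) (h2 (i z (i a z))).symm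
  have step18 : (i (i (i (i (i z (i a z)) z) z) (i z z)) (i b z)) = (i (i (i z z) (i z z)) (i b z)) := congrArg (fun u => (i (i (i u z) (i z z)) (i b z))) h0a
  have step19 : (i (i (i z z) (i z z)) (i b z)) = (i (i (i z z) (i z z)) (i (i (i b z) z) z)) := congrArg (fun u => (i (i (i z z) (i z z)) u)) (h2 (i b z)).symm
  have step20 : (i (i (i z z) (i z z)) (i (i (i b z) z) z)) = (i (i (i (i (i z z) (i z z)) (i (i (i b z) z) z)) z) z) := (h2 (i (i (i z z) (i z z)) (i (i (i b z) z) z))).symm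
  have step21 : (i (i (i (i (i z z) (i z z)) (i (i (i b z) z) z)) z) z) = (i (i (i (i z z) (i b z)) z) z) := congrArg (fun u => (i u z)) (hI (i z z) (i b z) z).symm
  have step22 : (i (i (i (i z z) (i b z)) z) z) = (i (i (i (i z z) (i b z)) (i (i z z) z)) z) := congrArg (fun u => (i (i (i (i z z) (i b z)) u) z)) (h2 z).symm
  have step23 : (i (i (i (i z z) (i b z)) (i (i z z) z)) z) = (i (i (i b z) z) z) := (hI (i b z) z z).symm
  have step24 : (i (i (i b z) z) z) = (i b z) := (h2 (i b z))
  exact ((((((((((((((((((((((((step0).trans step1).trans step2).trans step3).trans step4).trans step5).trans step6).trans step7).trans step8).trans step9).trans step10).trans step11).trans step12).trans step13).trans step14).trans step15).trans step16).trans step17).trans step18).trans step19).trans step20).trans step21).trans step22).trans step23).trans step24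
end

section
/- In any algebra A in I₂,₀, if 0 ⊑ a and 0 ⊑ b (i.e., (0 → a')' = 0 and (0 → b')' = 0), then 0 ⊑ a → b (i.e., (0 → (a → b)')' = 0). -/
/-!
The key fact is that `x ↦ 0 → x` distributes over `→`: `0 → (x → y) = (0 → x) → (0 → y)`.
It comes from `0 → x = (x → 0') → 0'` together with `(x → y) → 0' = ((0 → x) → (0 → y')')'`
(axiom (I) at `w = 0'`), whose right side does not change when `x` is replaced by the
idempotent image `0 → x`. Distributivity gives `0 → x' = (0 → x) → 0'`, hence `0 ⊑ x` iff
`0 → x = 0'`, and then `0 → (a → b) = 0' → 0' = 0'`.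
-/

/-- The variety `I₂,₀`; the axiom `0'' = 0` is the instance `x = 0` of `neg_neg`. -/
structure IsI20 {A : Type*} (i : A → A → A) (z : A) : Prop where
  imp_imp_eq : ∀ x y w, i (i x y) w = i (i (i (i w z) x) (i (i y w) z)) z
  neg_neg : ∀ x, i (i x z) z = x

def ZroupoidLE {A : Type*} (i : A → A → A) (z x y : A) : Prop :=
  i (i x (i y z)) z = x

namespace IsI20

variable {A : Type*} {i : A → A → A} {z : A}

local infixr:60 " ⇒ " => i
local notation:max x "′" => i x z
local infix:50 " ⊑ " => ZroupoidLE i z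

theorem neg_injective (h : IsI20 i z) : Function.Injective fun x => x′ := by
  intro x y hxy
  simpa only [h.neg_neg] using congrArg (· ′) hxy

theorem one_imp (h : IsI20 i z) (x : A) : z′ ⇒ x = x := by
  simpa only [h.neg_neg] using (h.imp_imp_eq x z z).symm

theorem zero_imp_one (h : IsI20 i z) : z ⇒ z′ = z′ := by
  simpa only [h.neg_neg, h.one_imp] using (h.imp_imp_eq z z z′).symm

theorem neg_imp_self (h : IsI20 i z) (x : A) : x′ ⇒ x = x :=
  h.neg_injective (by simpa only [h.neg_neg, h.one_imp, h.zero_imp_one] using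
    (h.imp_imp_eq z z′ x′).symm)

theorem zero_imp_eq_neg_imp_one (h : IsI20 i z) (x : A) : z ⇒ x = x′ ⇒ z′ := by
  simpa only [h.neg_neg, h.zero_imp_one] using (h.imp_imp_eq x z z′).symm

theorem zero_imp_neg (h : IsI20 i z) (x : A) : z ⇒ x′ = x ⇒ z′ := by
  rw [h.zero_imp_eq_neg_imp_one, h.neg_neg]

theorem zero_imp_imp_one (h : IsI20 i z) (x : A) : (z ⇒ x) ⇒ z′ = x ⇒ z′ := by
  simpa only [h.neg_neg, h.one_imp] using h.imp_imp_eq z x z′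

theorem zero_imp_eq_imp_one_imp_one (h : IsI20 i z) (x : A) :
    z ⇒ x = (x ⇒ z′) ⇒ z′ := by
  rw [h.zero_imp_eq_neg_imp_one, ← h.zero_imp_imp_one, h.zero_imp_neg]

theorem zero_imp_zero_imp (h : IsI20 i z) (x : A) : z ⇒ (z ⇒ x) = z ⇒ x := by
  rw [h.zero_imp_eq_imp_one_imp_one (z ⇒ x), h.zero_imp_imp_one,
    ← h.zero_imp_eq_imp_one_imp_one]

theorem imp_imp_one (h : IsI20 i z) (x y : A) :
    (x ⇒ y) ⇒ z′ = ((z ⇒ x) ⇒ (z ⇒ y′)′)′ := by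
  rw [h.imp_imp_eq, h.neg_neg, ← h.zero_imp_neg]

theorem imp_imp_one_eq_zero_imp_imp_imp_one (h : IsI20 i z) (x y : A) :
    (x ⇒ y) ⇒ z′ = ((z ⇒ x) ⇒ y) ⇒ z′ := by
  rw [h.imp_imp_one x, h.imp_imp_one (z ⇒ x), h.zero_imp_zero_imp]

theorem zero_imp_imp_eq_zero_imp_zero_imp_imp (h : IsI20 i z) (x y : A) :
    z ⇒ (x ⇒ y) = z ⇒ ((z ⇒ x) ⇒ y) := by
  rw [h.zero_imp_eq_imp_one_imp_one (x ⇒ y), h.imp_imp_one_eq_zero_imp_imp_imp_one x y,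
    ← h.zero_imp_eq_imp_one_imp_one]

theorem zero_imp_imp_eq (h : IsI20 i z) (x y : A) : (z ⇒ x) ⇒ y = (y ⇒ x) ⇒ y := by
  rw [h.imp_imp_eq z x y, h.imp_imp_eq y x y, h.neg_neg, h.neg_imp_self]

theorem zero_imp_imp_eq_neg (h : IsI20 i z) (x y : A) :
    (z ⇒ x) ⇒ y = ((z ⇒ x′) ⇒ y′)′ := by
  rw [h.zero_imp_eq_neg_imp_one x, h.imp_imp_eq, h.one_imp, h.zero_imp_imp_eq]

theorem zero_imp_zero_imp_imp (h : IsI20 i z) (x y : A) :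
    z ⇒ ((z ⇒ x) ⇒ y) = (z ⇒ x) ⇒ (z ⇒ y) := by
  calc z ⇒ ((z ⇒ x) ⇒ y) = ((z ⇒ x′) ⇒ y′) ⇒ z′ := by
        rw [h.zero_imp_eq_neg_imp_one, h.zero_imp_imp_eq_neg x y, h.neg_neg]
    _ = ((z ⇒ x′) ⇒ (z ⇒ y)′)′ := by rw [h.imp_imp_one, h.zero_imp_zero_imp, h.neg_neg]
    _ = (z ⇒ x) ⇒ (z ⇒ y) := (h.zero_imp_imp_eq_neg x (z ⇒ y)).symm

theorem zero_imp_imp (h : IsI20 i z) (x y : A) :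
    z ⇒ (x ⇒ y) = (z ⇒ x) ⇒ (z ⇒ y) := by
  rw [h.zero_imp_imp_eq_zero_imp_zero_imp_imp, h.zero_imp_zero_imp_imp]

theorem zero_le_iff (h : IsI20 i z) (x : A) : z ⊑ x ↔ z ⇒ x = z′ := by
  have zero_imp_neg_eq (y : A) : z ⇒ y′ = (z ⇒ y) ⇒ z′ := h.zero_imp_imp y z
  unfold ZroupoidLE
  rw [← h.neg_injective.eq_iff, h.neg_neg, zero_imp_neg_eq]
  constructor
  · intro hx
    rw [← h.neg_neg x, zero_imp_neg_eq, zero_imp_neg_eq, hx, h.one_imp]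
  · intro hx
    rw [hx, h.one_imp]

end IsI20

theorem stmt_18_general (A : Type*) (i : A → A → A) (z : A)
    (hI : ∀ x y w : A, i (i x y) w = i (i (i (i w z) x) (i (i y w) z)) z)
    (h2 : ∀ x : A, i (i x z) z = x)
    (a b : A) (h0a : i (i z (i a z)) z = z) (h0b : i (i z (i b z)) z = z) :
    i (i z (i (i a b) z)) z = z := by
  have h : IsI20 i z := ⟨hI, h2⟩
  have ha := (h.zero_le_iff a).1 h0a
  have hb := (h.zero_le_iff b).1 h0b
  refine (h.zero_le_iff (i a b)).2 ?_
  rw [h.zero_imp_imp, ha, hb, h.one_imp]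

theorem stmt_18 (A : Type*) (i : A → A → A) (z : A)
    (hI : ∀ x y w : A, i (i x y) w = i (i (i (i w z) x) (i (i y w) z)) z)
    (hI0 : i (i z z) z = z)
    (h2 : ∀ x : A, i (i x z) z = x)
    (a b : A) (h0a : i (i z (i a z)) z = z) (h0b : i (i z (i b z)) z = z) :
    i (i z (i (i a b) z)) z = z :=
  stmt_18_general A i z hI h2 a b h0a h0b
end
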